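/- Let Γ be a graph, let ξ̄ ∈ (0,1], and let f : C → Γ be a cycle in Γ. Then d_Γ(f(p), f(q)) ≥ ξ̄·|C|/2 for every antipodal pair of points p, q ∈ C if and only if d_Γ(f(p), f(q)) ≥ d_C(p,q) − (1 − ξ̄)·|C|/2 for every pair of points p, q ∈ C. -/

import Mathlib

open scoped Classical

noncomputable section

namespace ShortcutGraphs

/-- Path metric on (the geometric realization of) the cycle graph `C` with `n` edges:
points of `C` are parametrized by `ℝ` modulo `n`, with each edge isometric to `[0,1]`. -/
def cdist (n : ℕ) (p q : ℝ) : ℝ := ⨅ k : ℤ, |p - q + k * (n : ℝ)|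

variable {V : Type*}

/-- A cycle of length `n` in the simplicial graph `G`: a nondegenerate combinatorial map
from the cycle graph with `n` edges, recorded by the images of its vertices `0, 1, …, n-1`
(indexed by `ZMod n`); consecutive vertices map to adjacent vertices of `G`. -/
def IsCycle (G : SimpleGraph V) (n : ℕ) (c : ZMod n → V) : Prop :=
  ∀ i : ZMod n, G.Adj (c i) (c (i + 1))

/-- Distance, in the geometric realization of the graph `G` (each edge isometric to `[0,1]`,
equipped with the path metric), between the images under the cycle `c` of the points of the
cycle graph parametrized by `p` and `q`.  The point parametrized by `p` lies on the edge of
the cycle joining vertex `⌊p⌋` to vertex `⌊p⌋ + 1`, at distance `p - ⌊p⌋` from the former; a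
geodesic between two points of a graph either stays within one closed edge (the `if` terms)
or consists of a piece of an edge, a geodesic between two vertices, and a piece of an edge
(the `route` term). -/
def rdist (G : SimpleGraph V) (n : ℕ) (c : ZMod n → V) (p q : ℝ) : ℝ :=
  let i : ZMod n := ((⌊p⌋ : ℤ) : ZMod n)
  let j : ZMod n := ((⌊q⌋ : ℤ) : ZMod n)
  let s : ℝ := Int.fract p
  let t : ℝ := Int.fract q
  let a : V := c i
  let b : V := c (i + 1)
  let u : V := c j
  let v : V := c (j + 1)
  let route : ℝ :=
    min (min (s + (G.dist a u : ℝ) + t) (s + (G.dist a v : ℝ) + (1 - t)))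
        (min ((1 - s) + (G.dist b u : ℝ) + t) ((1 - s) + (G.dist b v : ℝ) + (1 - t)))
  min route
    (min (if a = u ∧ b = v then |s - t| else route)
         (if a = v ∧ b = u then |s + t - 1| else route))

/-- Two points of the cycle graph with `n` edges are antipodal if their distance is `n/2`. -/
def Antipodal (n : ℕ) (p q : ℝ) : Prop := cdist n p q = (n : ℝ) / 2

/-- The cycle `c` is isometric: it is an isometric embedding at the level of all points of
the geometric realizations. -/
def IsIsometricCycle (G : SimpleGraph V) (n : ℕ) (c : ZMod n → V) : Prop :=
  ∀ p q : ℝ, rdist G n c p q = cdist n p q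

/-- The cycle `c` is `ξ`-almost isometric: `d_Γ(f(p), f(q)) ≥ ξ·|C|/2` for every antipodal
pair of points `p, q` of the cycle. -/
def IsAlmostIsometricCycle (G : SimpleGraph V) (n : ℕ) (c : ZMod n → V) (ξ : ℝ) : Prop :=
  ∀ p q : ℝ, Antipodal n p q → ξ * ((n : ℝ) / 2) ≤ rdist G n c p q

/-- A graph is shortcut if there is a bound `θ` on the lengths of its isometric cycles. -/
def Shortcut (G : SimpleGraph V) : Prop :=
  ∃ θ : ℕ, ∀ (n : ℕ) (c : ZMod n → V), 0 < n → IsCycle G n c → IsIsometricCycle G n c → n ≤ θ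

/-- A graph is strongly shortcut if for some `ξ ∈ (0,1)` there is a bound `θ` on the lengths
of its `ξ`-almost isometric cycles. -/
def StronglyShortcut (G : SimpleGraph V) : Prop :=
  ∃ (θ : ℕ) (ξ : ℝ), 0 < ξ ∧ ξ < 1 ∧
    ∀ (n : ℕ) (c : ZMod n → V), 0 < n → IsCycle G n c → IsAlmostIsometricCycle G n c ξ → n ≤ θ

lemma dist_succ_le (G : SimpleGraph V) {a x y : V} (h : G.Adj x y) :
    G.dist a y ≤ G.dist a x + 1 := by
  by_cases hr : G.Reachable a x
  · obtain ⟨w, hw⟩ := hr.exists_walk_length_eq_dist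
    calc G.dist a y ≤ (w.concat h).length := SimpleGraph.dist_le _
      _ = G.dist a x + 1 := by rw [SimpleGraph.Walk.length_concat, hw]
  · have hry : ¬ G.Reachable a y := fun hy => hr (hy.trans h.symm.reachable)
    rw [SimpleGraph.dist_eq_zero_of_not_reachable hry]
    omega

lemma rdist_succ_le (G : SimpleGraph V) {a x y : V} (h : G.Adj x y) :
    (G.dist a y : ℝ) ≤ (G.dist a x : ℝ) + 1 := by
  exact_mod_cast dist_succ_le G h

def core (A B Cc D s t : ℝ) (e1a e1b e2a e2b : Prop) : ℝ :=
  min (min (min (s + A + t) (s + B + (1 - t))) (min ((1 - s) + Cc + t) ((1 - s) + D + (1 - t))))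
    (min
      (if e1a ∧ e1b then |s - t| else
        min (min (s + A + t) (s + B + (1 - t))) (min ((1 - s) + Cc + t) ((1 - s) + D + (1 - t))))
      (if e2a ∧ e2b then |s + t - 1| else
        min (min (s + A + t) (s + B + (1 - t))) (min ((1 - s) + Cc + t) ((1 - s) + D + (1 - t)))))

lemma rdist_eq_core (G : SimpleGraph V) (n : ℕ) (c : ZMod n → V) (p q : ℝ) :
    rdist G n c p q =
      core (G.dist (c ((⌊p⌋ : ℤ) : ZMod n)) (c ((⌊q⌋ : ℤ) : ZMod n)) : ℝ)
        (G.dist (c ((⌊p⌋ : ℤ) : ZMod n)) (c (((⌊q⌋ : ℤ) : ZMod n) + 1)) : ℝ)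
        (G.dist (c (((⌊p⌋ : ℤ) : ZMod n) + 1)) (c ((⌊q⌋ : ℤ) : ZMod n)) : ℝ)
        (G.dist (c (((⌊p⌋ : ℤ) : ZMod n) + 1)) (c (((⌊q⌋ : ℤ) : ZMod n) + 1)) : ℝ)
        (Int.fract p) (Int.fract q)
        (c ((⌊p⌋ : ℤ) : ZMod n) = c ((⌊q⌋ : ℤ) : ZMod n))
        (c (((⌊p⌋ : ℤ) : ZMod n) + 1) = c (((⌊q⌋ : ℤ) : ZMod n) + 1))
        (c ((⌊p⌋ : ℤ) : ZMod n) = c (((⌊q⌋ : ℤ) : ZMod n) + 1))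
        (c (((⌊p⌋ : ℤ) : ZMod n) + 1) = c ((⌊q⌋ : ℤ) : ZMod n)) := rfl

lemma min_le_min_add {a b a' b' d : ℝ} (ha : a' ≤ a + d) (hb : b' ≤ b + d) :
    min a' b' ≤ min a b + d := by
  rcases le_total a b with h | h
  · rw [min_eq_left h]; exact (min_le_left a' b').trans ha
  · rw [min_eq_right h]; exact (min_le_right a' b').trans hb

lemma core_lip (A B Cc D s t t' : ℝ) (e1a e1b e2a e2b : Prop) :
    core A B Cc D s t' e1a e1b e2a e2b ≤ core A B Cc D s t e1a e1b e2a e2b + |t' - t| := by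
  have h0 := le_abs_self (t' - t)
  have h0' := neg_abs_le (t' - t)
  have hP : s + A + t' ≤ (s + A + t) + |t' - t| := by linarith
  have hQ : s + B + (1 - t') ≤ (s + B + (1 - t)) + |t' - t| := by linarith
  have hR : (1 - s) + Cc + t' ≤ ((1 - s) + Cc + t) + |t' - t| := by linarith
  have hS : (1 - s) + D + (1 - t') ≤ ((1 - s) + D + (1 - t)) + |t' - t| := by linarith
  have hroute := min_le_min_add (min_le_min_add hP hQ) (min_le_min_add hR hS)
  have h3 : |s - t'| ≤ |s - t| + |t' - t| := by
    have := abs_sub_le s t t'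
    rwa [abs_sub_comm t t'] at this
  have h4 : |s + t' - 1| ≤ |s + t - 1| + |t' - t| := by
    have h := abs_add_le (s + t - 1) (t' - t)
    have e : s + t - 1 + (t' - t) = s + t' - 1 := by ring
    rwa [e] at h
  unfold core
  refine min_le_min_add hroute (min_le_min_add ?_ ?_)
  · split_ifs with h
    · exact h3
    · exact hroute
  · split_ifs with h
    · exact h4
    · exact hroute

lemma core_one {A B Cc D s : ℝ} {e1a e1b e2a e2b : Prop} (hA : 0 ≤ A) (hB : 0 ≤ B) (hC : 0 ≤ Cc)
    (hD : 0 ≤ D) (hBA : B ≤ A + 1) (hDC : D ≤ Cc + 1) (h1 : e1a ∧ e1b → D = 0) (h2 : e2a ∧ e2b → B = 0)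
    (hs0 : 0 ≤ s) (hs1 : s ≤ 1) :
    core A B Cc D s 1 e1a e1b e2a e2b = min (s + B) ((1 - s) + D) := by
  have hl := min_le_left (s + B) ((1 - s) + D)
  have hr := min_le_right (s + B) ((1 - s) + D)
  unfold core
  apply le_antisymm
  · refine le_min ?_ ?_
    · exact ((min_le_left _ _).trans ((min_le_left _ _).trans (min_le_right _ _))).trans
        (by norm_num)
    · exact ((min_le_left _ _).trans ((min_le_right _ _).trans (min_le_right _ _))).trans
        (by norm_num)
  · have hroute : min (s + B) ((1 - s) + D) ≤
        min (min (s + A + 1) (s + B + (1 - 1))) (min ((1 - s) + Cc + 1) ((1 - s) + D + (1 - 1))) := by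
      refine le_min (le_min ?_ ?_) (le_min ?_ ?_) <;> linarith
    refine le_min hroute (le_min ?_ ?_)
    · split_ifs with h
      · have hD0 := h1 h
        have e : |s - 1| = 1 - s := by rw [abs_of_nonpos (by linarith)]; ring
        rw [e]; linarith
      · exact hroute
    · split_ifs with h
      · have hB0 := h2 h
        have e : |s + 1 - 1| = s := by rw [show s + 1 - 1 = s by ring, abs_of_nonneg hs0]
        rw [e]; linarith
      · exact hroute

lemma core_zero {A B Cc D s : ℝ} {e1a e1b e2a e2b : Prop} (hA : 0 ≤ A) (hB : 0 ≤ B) (hC : 0 ≤ Cc)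
    (hD : 0 ≤ D) (hAB : A ≤ B + 1) (hCD : Cc ≤ D + 1) (h1 : e1a ∧ e1b → A = 0) (h2 : e2a ∧ e2b → Cc = 0)
    (hs0 : 0 ≤ s) (hs1 : s ≤ 1) :
    core A B Cc D s 0 e1a e1b e2a e2b = min (s + A) ((1 - s) + Cc) := by
  have hl := min_le_left (s + A) ((1 - s) + Cc)
  have hr := min_le_right (s + A) ((1 - s) + Cc)
  unfold core
  apply le_antisymm
  · refine le_min ?_ ?_
    · exact ((min_le_left _ _).trans ((min_le_left _ _).trans (min_le_left _ _))).trans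
        (by norm_num)
    · exact ((min_le_left _ _).trans ((min_le_right _ _).trans (min_le_left _ _))).trans
        (by norm_num)
  · have hroute : min (s + A) ((1 - s) + Cc) ≤
        min (min (s + A + 0) (s + B + (1 - 0))) (min ((1 - s) + Cc + 0) ((1 - s) + D + (1 - 0))) := by
      refine le_min (le_min ?_ ?_) (le_min ?_ ?_) <;> linarith
    refine le_min hroute (le_min ?_ ?_)
    · split_ifs with h
      · have hA0 := h1 h
        have e : |s - 0| = s := by rw [show s - 0 = s by ring, abs_of_nonneg hs0]
        rw [e]; linarith
      · exact hroute
    · split_ifs with h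
      · have hC0 := h2 h
        have e : |s + 0 - 1| = 1 - s := by
          rw [show s + 0 - 1 = s - 1 by ring, abs_of_nonpos (by linarith)]; ring
        rw [e]; linarith
      · exact hroute

lemma rdist_step (G : SimpleGraph V) {n : ℕ} {c : ZMod n → V} (hc : IsCycle G n c)
    (p q : ℝ) :
    rdist G n c p ((⌊q⌋ : ℝ) + 1) ≤ rdist G n c p q + (((⌊q⌋ : ℝ) + 1) - q) ∧
      rdist G n c p q ≤ rdist G n c p ((⌊q⌋ : ℝ) + 1) + (((⌊q⌋ : ℝ) + 1) - q) := by
  have hs0 : (0:ℝ) ≤ Int.fract p := Int.fract_nonneg p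
  have hs1 : Int.fract p ≤ 1 := (Int.fract_lt_one p).le
  have ht0 : (0:ℝ) ≤ Int.fract q := Int.fract_nonneg q
  have ht1 : Int.fract q ≤ 1 := (Int.fract_lt_one q).le
  have hfloor : ⌊((⌊q⌋ : ℝ) + 1)⌋ = ⌊q⌋ + 1 := by
    rw [show ((⌊q⌋:ℝ) + 1) = ((⌊q⌋ + 1 : ℤ) : ℝ) by push_cast; ring, Int.floor_intCast]
  have hfract : Int.fract ((⌊q⌋ : ℝ) + 1) = 0 := by
    rw [show ((⌊q⌋:ℝ) + 1) = ((⌊q⌋ + 1 : ℤ) : ℝ) by push_cast; ring, Int.fract_intCast]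
  set i : ZMod n := ((⌊p⌋ : ℤ) : ZMod n) with hi
  set j : ZMod n := ((⌊q⌋ : ℤ) : ZMod n) with hj
  have hcast : ((⌊q⌋ + 1 : ℤ) : ZMod n) = j + 1 := by push_cast [hj]; ring
  have dnn : ∀ x y : V, (0:ℝ) ≤ (G.dist x y : ℝ) := fun x y => Nat.cast_nonneg _
  have hM1 : rdist G n c p ((⌊q⌋ : ℝ) + 1) =
      min (Int.fract p + (G.dist (c i) (c (j + 1)) : ℝ))
        ((1 - Int.fract p) + (G.dist (c (i + 1)) (c (j + 1)) : ℝ)) := by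
    rw [rdist_eq_core, hfloor, hfract, hcast]
    refine core_zero (dnn _ _) (dnn _ _) (dnn _ _) (dnn _ _)
      (rdist_succ_le G (hc (j + 1)).symm) (rdist_succ_le G (hc (j + 1)).symm) ?_ ?_ hs0 hs1
    · rintro ⟨h, -⟩; rw [h]; simp
    · rintro ⟨-, h⟩; rw [h]; simp
  have hM2 : core (G.dist (c i) (c j) : ℝ) (G.dist (c i) (c (j + 1)) : ℝ)
      (G.dist (c (i + 1)) (c j) : ℝ) (G.dist (c (i + 1)) (c (j + 1)) : ℝ)
      (Int.fract p) 1 (c i = c j) (c (i + 1) = c (j + 1)) (c i = c (j + 1))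
      (c (i + 1) = c j) =
      min (Int.fract p + (G.dist (c i) (c (j + 1)) : ℝ))
        ((1 - Int.fract p) + (G.dist (c (i + 1)) (c (j + 1)) : ℝ)) := by
    refine core_one (dnn _ _) (dnn _ _) (dnn _ _) (dnn _ _)
      (rdist_succ_le G (hc j)) (rdist_succ_le G (hc j)) ?_ ?_ hs0 hs1
    · rintro ⟨-, h⟩; rw [h]; simp
    · rintro ⟨h, -⟩; rw [h]; simp
  have hq : rdist G n c p q =
      core (G.dist (c i) (c j) : ℝ) (G.dist (c i) (c (j + 1)) : ℝ)
        (G.dist (c (i + 1)) (c j) : ℝ) (G.dist (c (i + 1)) (c (j + 1)) : ℝ)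
        (Int.fract p) (Int.fract q) (c i = c j) (c (i + 1) = c (j + 1)) (c i = c (j + 1))
        (c (i + 1) = c j) := rdist_eq_core G n c p q
  have hl1 := core_lip (G.dist (c i) (c j) : ℝ) (G.dist (c i) (c (j + 1)) : ℝ)
    (G.dist (c (i + 1)) (c j) : ℝ) (G.dist (c (i + 1)) (c (j + 1)) : ℝ)
    (Int.fract p) (Int.fract q) 1 (c i = c j) (c (i + 1) = c (j + 1)) (c i = c (j + 1))
    (c (i + 1) = c j)
  have hl2 := core_lip (G.dist (c i) (c j) : ℝ) (G.dist (c i) (c (j + 1)) : ℝ)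
    (G.dist (c (i + 1)) (c j) : ℝ) (G.dist (c (i + 1)) (c (j + 1)) : ℝ)
    (Int.fract p) 1 (Int.fract q) (c i = c j) (c (i + 1) = c (j + 1)) (c i = c (j + 1))
    (c (i + 1) = c j)
  have habs : |1 - Int.fract q| = ((⌊q⌋ : ℝ) + 1) - q := by
    rw [abs_of_nonneg (by linarith), Int.fract]; ring
  have habs' : |Int.fract q - 1| = ((⌊q⌋ : ℝ) + 1) - q := by
    rw [abs_of_nonpos (by linarith), Int.fract]; ring
  constructor
  · rw [hM1, hq, ← hM2]
    have := hl1; rw [habs] at this; linarith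
  · rw [hM1, hq, ← hM2]
    have := hl2; rw [habs'] at this; linarith

lemma rdist_same_floor (G : SimpleGraph V) {n : ℕ} (c : ZMod n → V) {q q' : ℝ}
    (h : ⌊q'⌋ = ⌊q⌋) (p : ℝ) :
    rdist G n c p q' ≤ rdist G n c p q + |q' - q| := by
  rw [rdist_eq_core G n c p q', rdist_eq_core G n c p q, h]
  have e : |Int.fract q' - Int.fract q| = |q' - q| := by
    rw [Int.fract, Int.fract, h]
    congr 1
    ring
  rw [← e]
  exact core_lip _ _ _ _ _ _ _ _ _ _ _

lemma rdist_lip_aux (G : SimpleGraph V) {n : ℕ} {c : ZMod n → V} (hc : IsCycle G n c)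
    (p : ℝ) : ∀ N : ℕ, ∀ q q' : ℝ, q ≤ q' → ⌊q'⌋ = ⌊q⌋ + N →
      rdist G n c p q' ≤ rdist G n c p q + (q' - q) ∧
        rdist G n c p q ≤ rdist G n c p q' + (q' - q) := by
  intro N
  induction N with
  | zero =>
    intro q q' hle hfl
    simp only [Nat.cast_zero, add_zero] at hfl
    have h1 := rdist_same_floor G c hfl p
    have h2 := rdist_same_floor G c hfl.symm p
    rw [abs_of_nonneg (by linarith)] at h1
    rw [abs_sub_comm, abs_of_nonneg (by linarith)] at h2
    exact ⟨h1, h2⟩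
  | succ N ih =>
    intro q q' hle hfl
    set r : ℝ := (⌊q⌋ : ℝ) + 1 with hr
    have hfr : ⌊r⌋ = ⌊q⌋ + 1 := by
      rw [hr, show ((⌊q⌋:ℝ) + 1) = ((⌊q⌋ + 1 : ℤ) : ℝ) by push_cast; ring, Int.floor_intCast]
    have hrq' : r ≤ q' := by
      have h1 : (⌊q⌋ : ℝ) + 1 ≤ (⌊q'⌋ : ℝ) := by
        have : ⌊q⌋ + 1 ≤ ⌊q'⌋ := by omega
        exact_mod_cast this
      have h2 : (⌊q'⌋ : ℝ) ≤ q' := Int.floor_le q'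
      linarith
    have hstep := rdist_step G hc p q
    have hih := ih r q' hrq' (by rw [hfr]; omega)
    have hqr : q ≤ r := by
      have := Int.lt_floor_add_one q
      linarith
    exact ⟨by linarith [hstep.1, hih.1], by linarith [hstep.2, hih.2]⟩

lemma rdist_lip (G : SimpleGraph V) {n : ℕ} {c : ZMod n → V} (hc : IsCycle G n c)
    (p q q' : ℝ) : rdist G n c p q' ≤ rdist G n c p q + |q' - q| := by
  rcases le_total q q' with h | h
  · have hfl : ⌊q'⌋ = ⌊q⌋ + ((⌊q'⌋ - ⌊q⌋).toNat : ℕ) := by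
      have := Int.floor_le_floor (R := ℝ) h
      omega
    have := (rdist_lip_aux G hc p _ q q' h hfl).1
    rwa [abs_of_nonneg (by linarith)]
  · have hfl : ⌊q⌋ = ⌊q'⌋ + ((⌊q⌋ - ⌊q'⌋).toNat : ℕ) := by
      have := Int.floor_le_floor (R := ℝ) h
      omega
    have := (rdist_lip_aux G hc p _ q' q h hfl).2
    rwa [abs_sub_comm, abs_of_nonneg (by linarith)]

lemma rdist_period (G : SimpleGraph V) {n : ℕ} (c : ZMod n → V) (p q : ℝ) (k : ℤ) :
    rdist G n c p (q + k * (n : ℝ)) = rdist G n c p q := by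
  have hq : q + k * (n : ℝ) = q + ((k * n : ℤ) : ℝ) := by push_cast; ring
  have h1 : ((⌊q + k * (n:ℝ)⌋ : ℤ) : ZMod n) = ((⌊q⌋ : ℤ) : ZMod n) := by
    rw [hq, Int.floor_add_intCast]
    push_cast [ZMod.natCast_self]
    ring
  have h2 : Int.fract (q + k * (n:ℝ)) = Int.fract q := by
    rw [hq, Int.fract_add_intCast]
  rw [rdist_eq_core, rdist_eq_core, h1, h2]

lemma cdist_bddBelow (n : ℕ) (p q : ℝ) :
    BddBelow (Set.range fun k : ℤ => |p - q + k * (n : ℝ)|) :=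
  ⟨0, by rintro x ⟨k, rfl⟩; positivity⟩

lemma cdist_le (n : ℕ) (p q : ℝ) (k : ℤ) : cdist n p q ≤ |p - q + (k : ℝ) * (n : ℝ)| :=
  ciInf_le (cdist_bddBelow n p q) k

lemma cdist_antipodal {n : ℕ} (hn : 0 < n) (p : ℝ) : Antipodal n p (p + (n : ℝ) / 2) := by
  have hn' : (0:ℝ) < n := by exact_mod_cast hn
  unfold Antipodal
  apply le_antisymm
  · have h := cdist_le n p (p + (n:ℝ)/2) 0
    have e : p - (p + (n:ℝ)/2) + ((0:ℤ):ℝ) * n = -((n:ℝ)/2) := by push_cast; ring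
    rwa [e, abs_neg, abs_of_nonneg (by positivity)] at h
  · apply le_ciInf
    intro k
    rcases le_or_gt k 0 with h | h
    · rw [le_abs]; right
      have hk : (k:ℝ) ≤ 0 := by exact_mod_cast h
      have : (k:ℝ) * n ≤ 0 := mul_nonpos_of_nonpos_of_nonneg hk hn'.le
      linarith
    · rw [le_abs]; left
      have hk : (1:ℝ) ≤ (k:ℝ) := by exact_mod_cast h
      nlinarith


theorem prop_pqna' {V : Type*} (G : SimpleGraph V) (n : ℕ) (hn : 0 < n)
    (c : ZMod n → V) (hc : IsCycle G n c) (ξ : ℝ) (hξ0 : 0 < ξ) (hξ1 : ξ ≤ 1) :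
    (∀ p q : ℝ, Antipodal n p q → ξ * ((n : ℝ) / 2) ≤ rdist G n c p q) ↔
      (∀ p q : ℝ, cdist n p q - (1 - ξ) * ((n : ℝ) / 2) ≤ rdist G n c p q) := by
  have hn' : (0:ℝ) < n := by exact_mod_cast hn
  constructor
  · intro h p q
    have hant := h p (p + (n:ℝ)/2) (cdist_antipodal hn p)
    set k : ℤ := -⌊(q - p)/(n:ℝ)⌋ with hk
    set y : ℝ := q - p + (k:ℝ) * n with hy
    have hy_eq : y = (n:ℝ) * Int.fract ((q - p)/(n:ℝ)) := by
      rw [hy, hk, Int.fract]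
      push_cast
      field_simp
      ring
    have hy0 : 0 ≤ y := by
      rw [hy_eq]
      have := Int.fract_nonneg ((q - p)/(n:ℝ))
      positivity
    have hy1 : y < n := by
      rw [hy_eq]
      calc (n:ℝ) * Int.fract ((q - p)/(n:ℝ)) < (n:ℝ) * 1 :=
            mul_lt_mul_of_pos_left (Int.fract_lt_one _) hn'
        _ = n := mul_one _
    have hlip := rdist_lip G hc p (q + (k:ℝ) * n) (p + (n:ℝ)/2)
    rw [rdist_period G c p q k] at hlip
    have habs : |p + (n:ℝ)/2 - (q + (k:ℝ) * n)| = |(n:ℝ)/2 - y| := by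
      congr 1
      rw [hy]
      ring
    rw [habs] at hlip
    have hc1 : cdist n p q ≤ y := by
      have h1 := cdist_le n p q (-k)
      have e : p - q + ((-k : ℤ):ℝ) * n = -y := by rw [hy]; push_cast; ring
      rwa [e, abs_neg, abs_of_nonneg hy0] at h1
    have hc2 : cdist n p q ≤ (n:ℝ) - y := by
      have h1 := cdist_le n p q (1 - k)
      have e : p - q + ((1 - k : ℤ):ℝ) * n = (n:ℝ) - y := by rw [hy]; push_cast; ring
      rwa [e, abs_of_nonneg (by linarith)] at h1
    have hfin : |(n:ℝ)/2 - y| ≤ (n:ℝ)/2 - cdist n p q := by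
      rcases le_total y ((n:ℝ)/2) with hy2 | hy2
      · rw [abs_of_nonneg (by linarith)]; linarith
      · rw [abs_of_nonpos (by linarith)]; linarith
    linarith
  · intro h p q hpq
    have h1 := h p q
    rw [Antipodal] at hpq
    rw [hpq] at h1
    linarith

/-- Proposition `pqna`.  Let `Γ` be a graph, let `ξ̄ ∈ (0,1]`, and let
`f : C → Γ` be a cycle in `Γ`.  Then `d_Γ(f(p), f(q)) ≥ ξ̄·|C|/2` for every antipodal pair of
points `p, q ∈ C` if and only if `d_Γ(f(p), f(q)) ≥ d_C(p,q) − (1 − ξ̄)·|C|/2` for every pair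
of points `p, q ∈ C`. -/
theorem prop_pqna {V : Type*} (G : SimpleGraph V) (n : ℕ) (hn : 0 < n)
    (c : ZMod n → V) (hc : IsCycle G n c) (ξ : ℝ) (hξ0 : 0 < ξ) (hξ1 : ξ ≤ 1) :
    (∀ p q : ℝ, Antipodal n p q → ξ * ((n : ℝ) / 2) ≤ rdist G n c p q) ↔
      (∀ p q : ℝ, cdist n p q - (1 - ξ) * ((n : ℝ) / 2) ≤ rdist G n c p q) := by
  exact prop_pqna' G n hn c hc ξ hξ0 hξ1

end ShortcutGraphs
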